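/- arXiv:math/0010030 — 3 statements merged into one kernel-verified Lean document; each statement's English description precedes it below -/
import Mathlib

section
/- The relative de Rham complex of the path algebra CQ over the vertex algebra V is acyclic: H^0_B(CQ) ≅ V = C^k and H^n_B(CQ) = 0 for all n ≥ 1, where cohomology is taken with respect to the complex Ω•_V CQ with differential d. -/
namespace Necklace

variable {k : ℕ} {A : Type}

/-- `isPath s t v l w` : the list of arrows `l` forms an oriented path from vertex `v`
to vertex `w` in the quiver with arrow set `A` and source/target maps `s`, `t`. -/
def isPath (s t : A → Fin k) : Fin k → List A → Fin k → Bool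
  | v, [], w => v = w
  | v, a :: l, w => s a = v && isPath s t (t a) l w

/-- An oriented path in the quiver. -/
structure PathIn (s t : A → Fin k) where
  src : Fin k
  tgt : Fin k
  arrows : List A
  is_path : isPath s t src arrows tgt = true

variable {s t : A → Fin k}

theorem isPath_append : ∀ {l l' : List A} {v w u : Fin k},
    isPath s t v l w = true → isPath s t w l' u = true →
      isPath s t v (l ++ l') u = true := by
  intro l
  induction l with
  | nil =>
    intro l' v w u h h'
    simp [isPath] at h
    subst h
    simpa using h'
  | cons a l ih =>
    intro l' v w u h h'
    simp only [isPath, List.cons_append, Bool.and_eq_true, decide_eq_true_eq] at h ⊢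
    exact ⟨h.1, ih h.2 h'⟩

/-- Concatenation of composable paths (first travel `p`, then `q`). -/
def PathIn.comp (p q : PathIn s t) (h : p.tgt = q.src) : PathIn s t :=
  ⟨p.src, q.tgt, p.arrows ++ q.arrows,
    isPath_append p.is_path (by rw [h]; exact q.is_path)⟩

/-- The length-zero path at a vertex (vertex idempotent). -/
def idPath (s t : A → Fin k) (v : Fin k) : PathIn s t :=
  ⟨v, v, [], by simp [isPath]⟩

/-- A model of the path algebra `ℂQ` : a `ℂ`-algebra `R` with a basis indexed by the
oriented paths of the quiver, multiplying by concatenation (zero if not composable),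
whose unit is the sum of the vertex idempotents. -/
structure Model (s t : A → Fin k) (R : Type) [Ring R] [Algebra ℂ R] where
  B : Module.Basis (PathIn s t) ℂ R
  mul_of_comp : ∀ p q : PathIn s t, ∀ h : p.tgt = q.src, B q * B p = B (p.comp q h)
  mul_of_ncomp : ∀ p q : PathIn s t, p.tgt ≠ q.src → B q * B p = 0
  one_eq : (1 : R) = ∑ v : Fin k, B (idPath s t v)

/-- The commutator subspace `[R,R]`, i.e. the `ℂ`-linear span of all commutators. -/
def commSub (R : Type) [Ring R] [Algebra ℂ R] : Submodule ℂ R :=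
  Submodule.span ℂ {z : R | ∃ x y : R, z = x * y - y * x}

/-- The length-one path given by a single arrow. -/
def arrPath (s t : A → Fin k) (a : A) : PathIn s t :=
  ⟨s a, t a, [a], by simp [isPath]⟩

/-- A model of the relative differential forms `Ω•_V ℂQ`: a graded `ℂ`-algebra `W` with
a degree `+1` differential `d` squaring to zero, generated by `ι(ℂQ)` and `d ι(ℂQ)`,
where `d` kills the vertex subalgebra `V`. -/
structure Forms {k : ℕ} {A : Type} {s t : A → Fin k} (R : Type) [Ring R] [Algebra ℂ R]
    (M : Model s t R) (W : Type) [Ring W] [Algebra ℂ W] where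
  gr : ℕ → Submodule ℂ W
  mul_mem : ∀ (m n : ℕ) (x y : W), x ∈ gr m → y ∈ gr n → x * y ∈ gr (m + n)
  ι : R →ₐ[ℂ] W
  ι_mem : ∀ x : R, ι x ∈ gr 0
  d : W →ₗ[ℂ] W
  d_mem : ∀ (n : ℕ) (x : W), x ∈ gr n → d x ∈ gr (n + 1)
  d_leibniz : ∀ (m : ℕ) (x : W), x ∈ gr m → ∀ y : W,
    d (x * y) = d x * y + ((-1 : ℂ) ^ m) • (x * d y)
  d_d : ∀ x : W, d (d x) = 0
  d_vertex : ∀ v : Fin k, d (ι (M.B (idPath s t v))) = 0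
  gen : Algebra.adjoin ℂ (Set.range ι ∪ Set.range fun x => d (ι x)) = ⊤

/-- Index of the basis of `Ω^n_V ℂQ`: tuples `(p₀, p₁, …, p_n)` of oriented paths with
`length(p_i) ≥ 1` for `i ≥ 1` and the starting vertex of `p_i` equal to the end vertex
of `p_{i+1}`. -/
structure FormTuple (s t : A → Fin k) (n : ℕ) where
  p : Fin (n + 1) → PathIn s t
  len : ∀ i : Fin (n + 1), i ≠ 0 → (p i).arrows ≠ []
  link : ∀ i : Fin n, (p i.castSucc).src = (p i.succ).tgt

/-- The relative `n`-form `p₀ dp₁ ⋯ dp_n` associated to a tuple of paths. -/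
noncomputable def formElem {k : ℕ} {A : Type} {s t : A → Fin k}
    {R : Type} [Ring R] [Algebra ℂ R] {M : Model s t R}
    {W : Type} [Ring W] [Algebra ℂ W] (F : Forms R M W)
    {n : ℕ} (tpl : FormTuple s t n) : W :=
  F.ι (M.B (tpl.p 0)) * (List.ofFn fun i : Fin n => F.d (F.ι (M.B (tpl.p i.succ)))).prod

/-!
On the basis forms the differential is combinatorial: `d(p₀ dp₁ ⋯ dpₙ)` vanishes when `p₀` is a
vertex, and otherwise equals `dp₀ dp₁ ⋯ dpₙ = e dp₀ dp₁ ⋯ dpₙ`, with `e` the vertex at the end of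
`p₀`, which is again a basis form. So `d` kills the basis forms with a vertex in front and maps
the others injectively to basis forms; in positive degree every basis form with a vertex in front
is such an image. Hence a closed form is a combination of basis forms with a vertex in front: in degree `0` these
are the vertex idempotents, and in positive degree they are exact.
-/

theorem _root_.Module.Basis.mem_span_image_compl_of_map_eq_zero {ι K M N : Type*} [Ring K]
    [AddCommGroup M] [Module K M] [AddCommGroup N] [Module K N]
    (b : Module.Basis ι K M) (f : M →ₗ[K] N) {S : Set ι} (hS : LinearIndepOn K (f ∘ b) S)
    (hzero : ∀ i ∉ S, f (b i) = 0) {x : M} (hx : f x = 0) :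
    x ∈ Submodule.span K (b '' Sᶜ) := by
  classical
  set c := b.repr x
  have hout : Finsupp.linearCombination K (f ∘ b) (c.filter (· ∉ S)) = 0 := by
    rw [Finsupp.linearCombination_apply, Finsupp.sum]
    refine Finset.sum_eq_zero fun i hi => ?_
    rw [Finsupp.support_filter, Finset.mem_filter] at hi
    simp only [Function.comp_apply, hzero i hi.2, smul_zero]
  have hin : c.filter (· ∈ S) = 0 := by
    refine linearIndepOn_iff.mp hS _
      ((Finsupp.mem_supported' _ _).2 fun _ => Finsupp.filter_apply_neg _ _) ?_
    calc Finsupp.linearCombination K (f ∘ b) (c.filter (· ∈ S))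
        = Finsupp.linearCombination K (f ∘ b) (c.filter (· ∈ S) + c.filter (· ∉ S)) := by
          rw [map_add, hout, add_zero]
      _ = f x := by
          rw [Finsupp.filter_add_filter_not, ← Finsupp.apply_linearCombination,
            b.linearCombination_repr]
      _ = 0 := hx
  rw [b.mem_span_image]
  intro i hi hiS
  refine Finsupp.mem_support_iff.mp hi ?_
  simpa [Finsupp.filter_apply_pos _ _ hiS] using DFunLike.congr_fun hin i

theorem PathIn.eq_idPath_of_arrows_eq_nil (p : PathIn s t) (h : p.arrows = []) :
    p = idPath s t p.src := by
  obtain ⟨v, w, l, hp⟩ := p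
  subst h
  simp only [isPath, decide_eq_true_eq] at hp
  subst hp
  rfl

theorem PathIn.comp_idPath (p : PathIn s t) : p.comp (idPath s t p.tgt) rfl = p := by
  obtain ⟨v, w, l, hp⟩ := p
  simp [PathIn.comp, idPath]

namespace FormTuple

variable {n : ℕ}

theorem ext {u u' : FormTuple s t n} (h : u.p = u'.p) : u = u' := by
  cases u; cases u'; subst h; rfl

def shift (u : FormTuple s t n) (h : (u.p 0).arrows ≠ []) : FormTuple s t (n + 1) where
  p := Fin.cons (idPath s t (u.p 0).tgt) u.p
  len i hi := by
    cases i using Fin.cases with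
    | zero => exact absurd rfl hi
    | succ j =>
      rw [Fin.cons_succ]
      by_cases hj : j = 0
      · exact hj ▸ h
      · exact u.len j hj
  link i := by
    cases i using Fin.cases with
    | zero => rfl
    | succ j => simpa [← Fin.succ_castSucc] using u.link j

def tail (u : FormTuple s t (n + 1)) : FormTuple s t n where
  p := Fin.tail u.p
  len i _ := u.len i.succ i.succ_ne_zero
  link i := by simpa [Fin.tail, ← Fin.succ_castSucc] using u.link i.succ

theorem tail_head_arrows_ne_nil (u : FormTuple s t (n + 1)) : (u.tail.p 0).arrows ≠ [] :=
  u.len 1 one_ne_zero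

theorem shift_tail (u : FormTuple s t (n + 1)) (h : (u.p 0).arrows = []) :
    u.tail.shift u.tail_head_arrows_ne_nil = u := by
  refine ext ((congrArg₂ Fin.cons ?_ rfl).trans (Fin.cons_self_tail u.p))
  rw [(u.p 0).eq_idPath_of_arrows_eq_nil h]
  exact congrArg (idPath s t) (u.link 0).symm

theorem shift_injective :
    Function.Injective fun u : {u : FormTuple s t n // (u.p 0).arrows ≠ []} => u.1.shift u.2 :=
  fun u u' h => Subtype.ext <| ext <| funext fun i => by
    simpa [shift] using congrArg (fun v : FormTuple s t (n + 1) => v.p i.succ) h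

end FormTuple

namespace Forms

variable {R : Type} [Ring R] [Algebra ℂ R] {M : Model s t R}
  {W : Type} [Ring W] [Algebra ℂ W] (F : Forms R M W)

theorem d_one : F.d 1 = 0 := by
  simpa using F.d_leibniz 0 1 (by simpa using F.ι_mem 1) 1

theorem d_prod_d_ι {n : ℕ} (r : Fin n → R) :
    F.d (List.ofFn fun i => F.d (F.ι (r i))).prod = 0 := by
  induction n with
  | zero => simpa using F.d_one
  | succ n ih =>
    rw [List.ofFn_succ, List.prod_cons, F.d_leibniz 1 _ (F.d_mem 0 _ (F.ι_mem _)), F.d_d,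
      ih fun i => r i.succ, zero_mul, mul_zero, smul_zero, add_zero]

theorem ι_idPath_tgt_mul_d (p : PathIn s t) :
    F.ι (M.B (idPath s t p.tgt)) * F.d (F.ι (M.B p)) = F.d (F.ι (M.B p)) := by
  have h := F.d_leibniz 0 (F.ι (M.B (idPath s t p.tgt))) (F.ι_mem _) (F.ι (M.B p))
  rwa [F.d_vertex, zero_mul, zero_add, pow_zero, one_smul, ← map_mul,
    M.mul_of_comp p (idPath s t p.tgt) rfl, p.comp_idPath, eq_comm] at h

theorem d_formElem {n : ℕ} (u : FormTuple s t n) :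
    F.d (formElem F u) =
      F.d (F.ι (M.B (u.p 0))) * (List.ofFn fun i => F.d (F.ι (M.B (u.p i.succ)))).prod := by
  rw [formElem, F.d_leibniz 0 _ (F.ι_mem _), pow_zero, one_smul,
    F.d_prod_d_ι fun i => M.B (u.p i.succ), mul_zero, add_zero]

theorem d_formElem_of_arrows_eq_nil {n : ℕ} (u : FormTuple s t n) (h : (u.p 0).arrows = []) :
    F.d (formElem F u) = 0 := by
  rw [d_formElem, (u.p 0).eq_idPath_of_arrows_eq_nil h, F.d_vertex, zero_mul]

theorem d_formElem_eq_formElem_shift {n : ℕ} (u : FormTuple s t n)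
    (h : (u.p 0).arrows ≠ []) : F.d (formElem F u) = formElem F (u.shift h) := by
  rw [d_formElem]
  simp only [formElem, FormTuple.shift, List.ofFn_succ, Fin.cons_zero,
    Fin.cons_succ, List.prod_cons, ← mul_assoc, ι_idPath_tgt_mul_d]

theorem mem_span_formElem_of_d_eq_zero {n : ℕ}
    {b : Module.Basis (FormTuple s t n) ℂ (F.gr n)} (hb : ∀ u, (b u : W) = formElem F u)
    {b' : Module.Basis (FormTuple s t (n + 1)) ℂ (F.gr (n + 1))}
    (hb' : ∀ u, (b' u : W) = formElem F u) {x : W} (hx : x ∈ F.gr n) (hdx : F.d x = 0) :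
    x ∈ Submodule.span ℂ (formElem F '' {u : FormTuple s t n | (u.p 0).arrows = []}) := by
  set S := {u : FormTuple s t n | (u.p 0).arrows ≠ []}
  have hS : LinearIndepOn ℂ ((F.d ∘ₗ (F.gr n).subtype) ∘ b) S := by
    have hshift : (fun u : S => (F.d ∘ₗ (F.gr n).subtype) (b u)) =
        (fun u => (b' u : W)) ∘ fun u : S => u.1.shift u.2 :=
      funext fun u => by simp [hb, hb', d_formElem_eq_formElem_shift F u.1 u.2]
    change LinearIndependent ℂ (fun u : S => (F.d ∘ₗ (F.gr n).subtype) (b u))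
    rw [hshift]
    exact (b'.linearIndependent.map' _ (Submodule.ker_subtype _)).comp _
      FormTuple.shift_injective
  have hclosed := b.mem_span_image_compl_of_map_eq_zero (F.d ∘ₗ (F.gr n).subtype) hS
    (fun u hu => by simpa [hb] using F.d_formElem_of_arrows_eq_nil u (not_not.mp hu))
    (x := ⟨x, hx⟩) hdx
  have := Submodule.mem_map_of_mem (f := (F.gr n).subtype) hclosed
  rw [Submodule.map_span, Set.image_image] at this
  simpa [hb, S, Set.compl_ofPred] using this

theorem mem_span_vertex_of_d_eq_zero
    {b : Module.Basis (FormTuple s t 0) ℂ (F.gr 0)} (hb : ∀ u, (b u : W) = formElem F u)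
    {b' : Module.Basis (FormTuple s t 1) ℂ (F.gr 1)} (hb' : ∀ u, (b' u : W) = formElem F u)
    {x : W} (hx : x ∈ F.gr 0) (hdx : F.d x = 0) :
    x ∈ Submodule.span ℂ (Set.range fun v => F.ι (M.B (idPath s t v))) := by
  refine Submodule.span_le.mpr ?_ (F.mem_span_formElem_of_d_eq_zero hb hb' hx hdx)
  rintro _ ⟨u, hu, rfl⟩
  refine Submodule.subset_span ⟨(u.p 0).src, ?_⟩
  simp only [formElem, List.ofFn_zero, List.prod_nil, mul_one]
  rw [← (u.p 0).eq_idPath_of_arrows_eq_nil hu]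

theorem mem_map_d_of_d_eq_zero {n : ℕ}
    {bₙ : Module.Basis (FormTuple s t n) ℂ (F.gr n)} (hbₙ : ∀ u, (bₙ u : W) = formElem F u)
    {b : Module.Basis (FormTuple s t (n + 1)) ℂ (F.gr (n + 1))}
    (hb : ∀ u, (b u : W) = formElem F u)
    {b' : Module.Basis (FormTuple s t (n + 2)) ℂ (F.gr (n + 2))}
    (hb' : ∀ u, (b' u : W) = formElem F u) {x : W} (hx : x ∈ F.gr (n + 1)) (hdx : F.d x = 0) :
    x ∈ (F.gr n).map F.d := by
  refine Submodule.span_le.mpr ?_ (F.mem_span_formElem_of_d_eq_zero hb hb' hx hdx)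
  rintro _ ⟨u, hu, rfl⟩
  rw [← u.shift_tail hu, ← F.d_formElem_eq_formElem_shift]
  exact Submodule.mem_map_of_mem (hbₙ u.tail ▸ (bₙ u.tail).2)

end Forms

theorem relative_deRham_acyclic_general
    {k : ℕ} {A : Type} {s t : A → Fin k}
    (R : Type) [Ring R] [Algebra ℂ R] (M : Model s t R)
    (W : Type) [Ring W] [Algebra ℂ W] (F : Forms R M W)
    -- each graded piece Ω^n has the basis of Lemma (statement 7)
    (bases : ∀ n : ℕ, ∃ b : Module.Basis (FormTuple s t n) ℂ (F.gr n),
      ∀ tpl : FormTuple s t n, (b tpl : W) = formElem F tpl) :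
    (∀ x : W, x ∈ F.gr 0 → (F.d x = 0 ↔
        x ∈ Submodule.span ℂ (Set.range fun v : Fin k => F.ι (M.B (idPath s t v))))) ∧
    (∀ (n : ℕ) (x : W), x ∈ F.gr (n + 1) → F.d x = 0 →
        ∃ y ∈ F.gr n, F.d y = x) := by
  refine ⟨fun x hx => ⟨fun hdx => ?_, fun hx' => ?_⟩, fun n x hx hdx => ?_⟩
  · obtain ⟨b, hb⟩ := bases 0
    obtain ⟨b', hb'⟩ := bases 1
    exact F.mem_span_vertex_of_d_eq_zero hb hb' hx hdx
  · exact (Submodule.span_le (p := LinearMap.ker F.d)).mpr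
      (Set.range_subset_iff.mpr F.d_vertex) hx'
  · obtain ⟨bₙ, hbₙ⟩ := bases n
    obtain ⟨b, hb⟩ := bases (n + 1)
    obtain ⟨b', hb'⟩ := bases (n + 2)
    exact F.mem_map_d_of_d_eq_zero hbₙ hb hb' hx hdx

/-- the relative de Rham complex `Ω•_V ℂQ` of the path algebra of a quiver
over the vertex algebra `V = ℂ^k` is acyclic: `H⁰_V(ℂQ) ≅ V` (i.e. the kernel of `d` in
degree `0` is exactly the span of the vertex idempotents) and `H^n_V(ℂQ) = 0` for all
`n ≥ 1` (every closed form of positive degree is exact).  The proof uses the Euler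
derivation `E`, whose Lie derivative acts on a basis form `p₀ dp₁ ⋯ dp_n` by
multiplication with the total length `ℓ(p₀)+⋯+ℓ(p_n)`. -/
theorem relative_deRham_acyclic
    {k : ℕ} {A : Type} [Fintype A] {s t : A → Fin k}
    (R : Type) [Ring R] [Algebra ℂ R] (M : Model s t R)
    (W : Type) [Ring W] [Algebra ℂ W] (F : Forms R M W)
    -- each graded piece Ω^n has the basis of Lemma (statement 7)
    (bases : ∀ n : ℕ, ∃ b : Module.Basis (FormTuple s t n) ℂ (F.gr n),
      ∀ tpl : FormTuple s t n, (b tpl : W) = formElem F tpl)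
    -- the Euler derivation E of ℂQ
    (E : R →ₗ[ℂ] R)
    (hE : ∀ x y : R, E (x * y) = E x * y + x * E y)
    (hEv : ∀ v : Fin k, E (M.B (idPath s t v)) = 0)
    (hEa : ∀ a : A, E (M.B (arrPath s t a)) = M.B (arrPath s t a))
    -- its Lie derivative L_E and contraction i_E on Ω•_V ℂQ
    (LE : W →ₗ[ℂ] W)
    (hLE : ∀ x y : W, LE (x * y) = LE x * y + x * LE y)
    (hLEι : ∀ x : R, LE (F.ι x) = F.ι (E x))
    (hLEd : ∀ x : R, LE (F.d (F.ι x)) = F.d (F.ι (E x)))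
    (iE : W →ₗ[ℂ] W)
    (hiE : ∀ (m : ℕ) (x : W), x ∈ F.gr m → ∀ y : W,
      iE (x * y) = iE x * y + ((-1 : ℂ) ^ m) • (x * iE y))
    (hiEι : ∀ x : R, iE (F.ι x) = 0)
    (hiEd : ∀ x : R, iE (F.d (F.ι x)) = F.ι (E x)) :
    (∀ x : W, x ∈ F.gr 0 → (F.d x = 0 ↔
        x ∈ Submodule.span ℂ (Set.range fun v : Fin k => F.ι (M.B (idPath s t v))))) ∧
    (∀ (n : ℕ) (x : W), x ∈ F.gr (n + 1) → F.d x = 0 →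
        ∃ y ∈ F.gr n, F.d y = x) :=
  relative_deRham_acyclic_general R M W F bases

end Necklace
end

section
/- The necklace bracket {w_1, w_2}_K = Σ_{a ∈ Q_a} (∂w_1/∂a · ∂w_2/∂a* − ∂w_1/∂a* · ∂w_2/∂a) mod [C𝔔, C𝔔] is antisymmetric and satisfies the Jacobi identity, making the span of necklace words of the double quiver 𝔔 a Lie algebra (the necklace Lie algebra N_Q). -/
/-!
The derivative `∂/∂b` of a cycle is invariant under rotating the cycle, so it kills commutators;
hence `{x, y}` lies in `[ℂ𝔔, ℂ𝔔]` as soon as `x` or `y` does, and the bracket descends to the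
quotient. Antisymmetry holds because `{x, y} + {y, x}` is a sum of commutators.

For the Jacobi identity let `θ_x` be the derivation of `ℂ𝔔` sending `a ↦ -∂x/∂a*` and
`a* ↦ ∂x/∂a`. Rotating each substituted term shows `θ_x z ≡ {x, z}` modulo commutators. Counting
pairs of occurrences in a cycle gives an exchange rule for second derivatives, from which
`∂{x, y}/∂c = θ_x (∂y/∂c) - θ_y (∂x/∂c)`. Hence `θ_{x,y}` and `[θ_x, θ_y]` agree on arrows, and
being derivations vanishing on the vertices they are equal. Since derivations preserve
`[ℂ𝔔, ℂ𝔔]`, this gives `{{x, y}, z} ≡ {x, {y, z}} - {y, {x, z}}`, which together with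
antisymmetry is the Jacobi identity.
-/

namespace Necklace

variable {k : ℕ} {A : Type}

variable {s t : A → Fin k}

variable {R : Type} [Ring R] [Algebra ℂ R]

/-- The partial derivative `∂p/∂b` of an oriented cycle `p` with respect to the arrow
`b`: the sum, over all occurrences of `b` in `p`, of the path obtained by deleting that
occurrence and reading the cycle starting there (zero on non-cycles). -/
noncomputable def derivPath [DecidableEq A] (M : Model s t R) (b : A) (p : PathIn s t) :
    R :=
  ∑ i ∈ Finset.range p.arrows.length,
    if h : p.src = p.tgt ∧ p.arrows[i]? = some b ∧
        isPath s t (t b) (p.arrows.drop (i + 1) ++ p.arrows.take i) (s b) = true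
    then M.B ⟨t b, s b, p.arrows.drop (i + 1) ++ p.arrows.take i, h.2.2⟩ else 0

/-- The partial differential operator `∂/∂b` on necklace words, as a linear map
`ℂQ → ℂQ` (defined on the basis of paths, zero on non-cycles). -/
noncomputable def D [DecidableEq A] (M : Model s t R) (b : A) : R →ₗ[ℂ] R :=
  M.B.constr ℂ (derivPath M b)

section Double

variable {A₀ : Type} (s₀ t₀ : A₀ → Fin k)

/-- Source map of the double quiver `𝔔` (arrows `a` and reversed arrows `a*`). -/
def ds : A₀ ⊕ A₀ → Fin k := Sum.elim s₀ t₀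

/-- Target map of the double quiver `𝔔`. -/
def dt : A₀ ⊕ A₀ → Fin k := Sum.elim t₀ s₀

variable [DecidableEq A₀] [Fintype A₀]

/-- The Kontsevich (necklace) bracket on `ℂ𝔔`, before passing to the commutator
quotient: `{x,y} = Σ_{a ∈ Q_a} (∂x/∂a ∂y/∂a* − ∂x/∂a* ∂y/∂a)`. -/
noncomputable def br (M : Model (ds s₀ t₀) (dt s₀ t₀) R) (x y : R) : R :=
  ∑ a : A₀,
    (D M (Sum.inl a) x * D M (Sum.inr a) y - D M (Sum.inr a) x * D M (Sum.inl a) y)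

/-- `θ` is a `V`-derivation of `ℂ𝔔`. -/
def IsVDer (M : Model (ds s₀ t₀) (dt s₀ t₀) R) (θ : R →ₗ[ℂ] R) : Prop :=
  (∀ x y : R, θ (x * y) = θ x * y + x * θ y) ∧
    ∀ v : Fin k, θ (M.B (idPath (ds s₀ t₀) (dt s₀ t₀) v)) = 0

/-- `θ` is the derivation `θ_x` attached to `x ∈ ℂ𝔔`, i.e. the `V`-derivation with
`θ(a) = −∂x/∂a*` and `θ(a*) = ∂x/∂a` for every arrow `a` of `Q`. -/
def IsThetaOf (M : Model (ds s₀ t₀) (dt s₀ t₀) R) (x : R) (θ : R →ₗ[ℂ] R) : Prop :=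
  IsVDer s₀ t₀ M θ ∧
    ∀ a : A₀,
      θ (M.B (arrPath (ds s₀ t₀) (dt s₀ t₀) (Sum.inl a))) = - D M (Sum.inr a) x ∧
      θ (M.B (arrPath (ds s₀ t₀) (dt s₀ t₀) (Sum.inr a))) = D M (Sum.inl a) x

end Double

section QuotientLift

variable {S M N P : Type*} [CommRing S] [AddCommGroup M] [AddCommGroup N] [AddCommGroup P]
  [Module S M] [Module S N] [Module S P]

def _root_.Submodule.liftQ₂ (p : Submodule S M) (q : Submodule S N) (f : M →ₗ[S] N →ₗ[S] P)
    (hp : p ≤ LinearMap.ker f) (hq : q ≤ LinearMap.ker f.flip) : M ⧸ p →ₗ[S] N ⧸ q →ₗ[S] P :=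
  p.liftQ (q.liftQ f.flip hq).flip fun _ hx =>
    q.linearMap_qext (LinearMap.ext fun y => LinearMap.congr_fun (hp hx) y)

@[simp]
theorem _root_.Submodule.liftQ₂_mk (p : Submodule S M) (q : Submodule S N)
    (f : M →ₗ[S] N →ₗ[S] P) (hp : p ≤ LinearMap.ker f) (hq : q ≤ LinearMap.ker f.flip)
    (x : M) (y : N) :
    p.liftQ₂ q f hp hq (Submodule.Quotient.mk x) (Submodule.Quotient.mk y) = f x y :=
  rfl

end QuotientLift

theorem isPath_append_iff {l l' : List A} {v u : Fin k} :
    isPath s t v (l ++ l') u = true ↔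
      ∃ w, isPath s t v l w = true ∧ isPath s t w l' u = true := by
  induction l generalizing v with
  | nil => simp [isPath]
  | cons a l ih => simp [isPath, ih, and_assoc]

theorem isPath_split_at {l : List A} {v u : Fin k} {i : ℕ} {b : A}
    (h : isPath s t v l u = true) (hb : l[i]? = some b) :
    isPath s t v (l.take i) (s b) = true ∧ isPath s t (t b) (l.drop (i + 1)) u = true := by
  obtain ⟨hi, rfl⟩ := List.getElem?_eq_some_iff.mp hb
  rw [← List.take_append_drop i l, List.drop_eq_getElem_cons hi, isPath_append_iff] at h
  obtain ⟨w, hw, hw'⟩ := h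
  simp only [isPath, Bool.and_eq_true, decide_eq_true_eq] at hw'
  obtain ⟨rfl, hw'⟩ := hw'
  exact ⟨hw, hw'⟩

theorem isPath_drop_append_take {l : List A} {v : Fin k} {i : ℕ} {b : A}
    (h : isPath s t v l v = true) (hb : l[i]? = some b) :
    isPath s t (t b) (l.drop (i + 1) ++ l.take i) (s b) = true :=
  isPath_append (isPath_split_at h hb).2 (isPath_split_at h hb).1

namespace Model

variable (M : Model s t R)

noncomputable def path (v w : Fin k) (l : List A) : R :=
  if h : isPath s t v l w = true then M.B ⟨v, w, l, h⟩ else 0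

variable {M}

theorem path_of_isPath {v w : Fin k} {l : List A} (h : isPath s t v l w = true) :
    M.path v w l = M.B ⟨v, w, l, h⟩ :=
  dif_pos h

theorem path_of_not_isPath {v w : Fin k} {l : List A} (h : ¬ isPath s t v l w = true) :
    M.path v w l = 0 :=
  dif_neg h

@[simp]
theorem path_src_tgt (p : PathIn s t) : M.path p.src p.tgt p.arrows = M.B p :=
  path_of_isPath p.is_path

theorem path_eq_basis {v w : Fin k} {p : PathIn s t} (hv : v = p.src) (hw : w = p.tgt) :
    M.path v w p.arrows = M.B p := by
  subst hv hw
  exact path_src_tgt p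

theorem path_mul_path {v w u : Fin k} {l l' : List A}
    (hl : isPath s t v l w = true) (hl' : isPath s t w l' u = true) :
    M.path w u l' * M.path v w l = M.path v u (l ++ l') := by
  rw [path_of_isPath hl, path_of_isPath hl', path_of_isPath (isPath_append hl hl')]
  exact M.mul_of_comp ⟨v, w, l, hl⟩ ⟨w, u, l', hl'⟩ rfl

theorem path_mul_path_of_ne {v w w' u : Fin k} {l l' : List A}
    (hl : isPath s t v l w = true) (hl' : isPath s t w' l' u = true) (hne : w ≠ w') :
    M.path w' u l' * M.path v w l = 0 := by
  rw [path_of_isPath hl, path_of_isPath hl']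
  exact M.mul_of_ncomp ⟨v, w, l, hl⟩ ⟨w', u, l', hl'⟩ hne

theorem path_mul_path_mul_path {a b c d : Fin k} {l₁ l₂ l₃ : List A}
    (h₁ : isPath s t a l₁ b = true) (h₂ : isPath s t b l₂ c = true)
    (h₃ : isPath s t c l₃ d = true) :
    M.path c d l₃ * M.path b c l₂ * M.path a b l₁ = M.path a d (l₁ ++ l₂ ++ l₃) := by
  rw [path_mul_path h₂ h₃, path_mul_path h₁ (isPath_append h₂ h₃), List.append_assoc]

theorem path_nil_mul_path (v w : Fin k) (l : List A) :
    M.path w w [] * M.path v w l = M.path v w l := by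
  by_cases h : isPath s t v l w = true
  · rw [path_mul_path h (by simp [isPath]), List.append_nil]
  · rw [path_of_not_isPath h, mul_zero]

theorem path_mul_path_nil (v w : Fin k) (l : List A) :
    M.path v w l * M.path v v [] = M.path v w l := by
  by_cases h : isPath s t v l w = true
  · rw [path_mul_path (by simp [isPath]) h, List.nil_append]
  · rw [path_of_not_isPath h, zero_mul]

end Model

theorem mem_commSub_mul_sub_mul (u v : R) : u * v - v * u ∈ commSub R :=
  Submodule.subset_span ⟨u, v, rfl⟩

theorem mk_mul_comm (u v : R) :
    Submodule.Quotient.mk (p := commSub R) (u * v) = Submodule.Quotient.mk (v * u) :=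
  (Submodule.Quotient.eq _).2 (mem_commSub_mul_sub_mul u v)

theorem mk_mul_mul_eq_mk_mul (a z b : R) :
    Submodule.Quotient.mk (p := commSub R) (a * z * b) = Submodule.Quotient.mk (z * (b * a)) := by
  rw [mk_mul_comm, ← mul_assoc, mk_mul_comm]

theorem map_mem_commSub_of_leibniz {θ : R →ₗ[ℂ] R}
    (hθ : ∀ x y : R, θ (x * y) = θ x * y + x * θ y) {z : R} (hz : z ∈ commSub R) :
    θ z ∈ commSub R := by
  induction hz using Submodule.span_induction with
  | mem x hx =>
    obtain ⟨u, v, rfl⟩ := hx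
    rw [map_sub, hθ, hθ,
      show θ u * v + u * θ v - (θ v * u + v * θ u) = (θ u * v - v * θ u) + (u * θ v - θ v * u) by
        abel]
    exact Submodule.add_mem _ (mem_commSub_mul_sub_mul _ _) (mem_commSub_mul_sub_mul _ _)
  | zero => simp
  | add x y _ _ hx hy => simpa using Submodule.add_mem _ hx hy
  | smul c x _ hx => simpa using Submodule.smul_mem _ c hx

theorem leibniz_comp_sub_comp {θ₁ θ₂ : R →ₗ[ℂ] R}
    (h₁ : ∀ x y : R, θ₁ (x * y) = θ₁ x * y + x * θ₁ y)
    (h₂ : ∀ x y : R, θ₂ (x * y) = θ₂ x * y + x * θ₂ y) (x y : R) :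
    (θ₁ ∘ₗ θ₂ - θ₂ ∘ₗ θ₁) (x * y) = (θ₁ ∘ₗ θ₂ - θ₂ ∘ₗ θ₁) x * y + x * (θ₁ ∘ₗ θ₂ - θ₂ ∘ₗ θ₁) y := by
  simp only [LinearMap.sub_apply, LinearMap.comp_apply, h₁, h₂, map_add]
  noncomm_ring

theorem Model.ext_of_leibniz (M : Model s t R) {θ₁ θ₂ : R →ₗ[ℂ] R}
    (h₁ : ∀ x y : R, θ₁ (x * y) = θ₁ x * y + x * θ₁ y)
    (h₂ : ∀ x y : R, θ₂ (x * y) = θ₂ x * y + x * θ₂ y)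
    (hid : ∀ v, θ₁ (M.B (idPath s t v)) = θ₂ (M.B (idPath s t v)))
    (harr : ∀ a, θ₁ (M.B (arrPath s t a)) = θ₂ (M.B (arrPath s t a))) :
    θ₁ = θ₂ := by
  suffices h : ∀ (l : List A) (v w : Fin k), θ₁ (M.path v w l) = θ₂ (M.path v w l) from
    M.B.ext fun p => by simpa using h p.arrows p.src p.tgt
  intro l
  induction l with
  | nil =>
    intro v w
    by_cases hvw : v = w
    · subst hvw
      have hv : M.path v v [] = M.B (idPath s t v) :=
        M.path_eq_basis (p := idPath s t v) rfl rfl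
      rw [hv, hid]
    · rw [M.path_of_not_isPath (by simpa [isPath] using hvw), map_zero, map_zero]
  | cons a l ih =>
    intro v w
    by_cases hp : isPath s t v (a :: l) w = true
    · obtain ⟨rfl, hl⟩ : s a = v ∧ isPath s t (t a) l w = true := by simpa [isPath] using hp
      have ha : M.path (s a) (t a) [a] = M.B (arrPath s t a) :=
        M.path_eq_basis (p := arrPath s t a) rfl rfl
      rw [← List.singleton_append, ← M.path_mul_path (s := s) (t := t) (by simp [isPath]) hl, ha,
        h₁, h₂, ih, harr]
    · rw [M.path_of_not_isPath hp, map_zero, map_zero]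

section Occurrences

/-- The arrows strictly between positions `i` and `j` of the cycle `l`, read forward from `i`;
for `i = j` this is the whole cycle with position `i` removed. -/
def cyclicSegment (l : List A) (i j : ℕ) : List A :=
  if i < j then (l.take j).drop (i + 1) else l.drop (i + 1) ++ l.take j

theorem cyclicSegment_self (l : List A) (i : ℕ) :
    cyclicSegment l i i = l.drop (i + 1) ++ l.take i := by
  simp [cyclicSegment]

variable [DecidableEq A] {W : Type*} [AddCommMonoid W]

/-- The sum of `F pre post` over all factorisations `l = pre ++ c :: post`. -/
def occSum (c : A) (l : List A) (F : List A → List A → W) : W :=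
  ∑ i ∈ Finset.range l.length, if l[i]? = some c then F (l.take i) (l.drop (i + 1)) else 0

theorem map_occSum {W' G : Type*} [AddCommMonoid W'] [FunLike G W W'] [AddMonoidHomClass G W W']
    (f : G) (c : A) (l : List A) (F : List A → List A → W) :
    f (occSum c l F) = occSum c l fun pre post => f (F pre post) := by
  simp only [occSum, map_sum, apply_ite f, map_zero]

theorem mul_occSum {S : Type*} [NonUnitalNonAssocSemiring S] (a : S) (c : A) (l : List A)
    (F : List A → List A → S) : a * occSum c l F = occSum c l fun pre post => a * F pre post :=
  map_occSum (AddMonoidHom.mulLeft a) c l F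

theorem occSum_mul {S : Type*} [NonUnitalNonAssocSemiring S] (a : S) (c : A) (l : List A)
    (F : List A → List A → S) : occSum c l F * a = occSum c l fun pre post => F pre post * a :=
  map_occSum (AddMonoidHom.mulRight a) c l F

theorem occSum_congr_of_isPath {c : A} {l : List A} {v w : Fin k} (hl : isPath s t v l w = true)
    {F G : List A → List A → W}
    (h : ∀ pre post, isPath s t v pre (s c) = true → isPath s t (t c) post w = true →
      F pre post = G pre post) :
    occSum c l F = occSum c l G := by
  refine Finset.sum_congr rfl fun i _ => ?_
  split_ifs with hc
  · exact h _ _ (isPath_split_at hl hc).1 (isPath_split_at hl hc).2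
  · rfl

theorem occSum_eq_zero_of_isPath {c : A} {l : List A} {v w : Fin k}
    (hl : isPath s t v l w = true) {F : List A → List A → W}
    (h : ∀ pre post, isPath s t v pre (s c) = true → isPath s t (t c) post w = true →
      F pre post = 0) :
    occSum c l F = 0 :=
  (occSum_congr_of_isPath hl h).trans (Finset.sum_eq_zero fun _ _ => ite_self 0)

theorem occSum_append (c : A) (m l : List A) (F : List A → List A → W) :
    occSum c (m ++ l) F =
      occSum c m (fun pre post => F pre (post ++ l)) +
        occSum c l (fun pre post => F (m ++ pre) post) := by
  rw [occSum, List.length_append, Finset.sum_range_add]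
  congr 1
  · refine Finset.sum_congr rfl fun i hi => ?_
    have hi : i < m.length := Finset.mem_range.mp hi
    rw [List.getElem?_append_left hi, List.take_append_of_le_length hi.le,
      List.drop_append_of_le_length hi]
  · refine Finset.sum_congr rfl fun i _ => ?_
    rw [List.getElem?_append_right (by omega), Nat.add_sub_cancel_left,
      List.take_length_add_append, Nat.add_assoc, List.drop_length_add_append]

/-- The positions of `cyclicSegment l p p` are the positions `j ≠ p` of `l`, read cyclically
from `p + 1`. -/
theorem occSum_cyclicSegment_self {l : List A} {p : ℕ} (hp : p < l.length) (c : A)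
    (F : List A → List A → W) :
    occSum c (cyclicSegment l p p) F =
      ∑ j ∈ Finset.range l.length, if j ≠ p ∧ l[j]? = some c then
        F (cyclicSegment l p j) (cyclicSegment l j p) else 0 := by
  obtain ⟨n, hn⟩ : ∃ n, l.length = p + (n + 1) := ⟨l.length - p - 1, by omega⟩
  rw [cyclicSegment_self, occSum_append, add_comm, hn, Finset.sum_range_add,
    Finset.sum_range_succ', if_neg (by simp)]
  simp only [add_zero]
  congr 1
  · have hlen : (l.take p).length = p := by simp; omega
    rw [occSum, hlen]
    refine Finset.sum_congr rfl fun i hi => ?_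
    have hi : i < p := Finset.mem_range.mp hi
    simp [hi, hi.ne, cyclicSegment, List.take_take, Nat.min_eq_left hi.le, hi.le.not_gt]
  · have hlen : (l.drop (p + 1)).length = n := by simp; omega
    rw [occSum, hlen]
    refine Finset.sum_congr rfl fun i _ => ?_
    simp [cyclicSegment, List.getElem?_drop, List.drop_take, List.drop_drop, Nat.add_assoc,
      Nat.add_comm 1, show p + (i + 1) - (p + 1) = i by omega]

end Occurrences

section CyclicDerivative

variable [DecidableEq A] (M : Model s t R)

noncomputable def cyclicDeriv (b : A) (l : List A) : R :=
  occSum b l fun pre post => M.path (t b) (s b) (post ++ pre)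

theorem D_basis (b : A) (p : PathIn s t) :
    D M b (M.B p) = if p.src = p.tgt then cyclicDeriv M b p.arrows else 0 := by
  rw [D, Module.Basis.constr_basis, derivPath]
  split_ifs with hp
  · refine Finset.sum_congr rfl fun i _ => ?_
    by_cases hb : p.arrows[i]? = some b
    · have hcyc := isPath_drop_append_take (hp ▸ p.is_path) hb
      rw [dif_pos ⟨hp, hb, hcyc⟩, if_pos hb]
      exact (Model.path_of_isPath hcyc).symm
    · rw [dif_neg fun h => hb h.2.1, if_neg hb]
  · exact Finset.sum_eq_zero fun i _ => dif_neg fun h => hp h.1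

theorem D_basis_mul_basis (b : A) (p q : PathIn s t) :
    D M b (M.B q * M.B p) =
      if p.tgt = q.src ∧ q.tgt = p.src then cyclicDeriv M b (p.arrows ++ q.arrows) else 0 := by
  by_cases h : p.tgt = q.src
  · rw [M.mul_of_comp p q h, D_basis]
    exact if_congr (by simp [PathIn.comp, h, eq_comm]) rfl rfl
  · rw [M.mul_of_ncomp p q h, map_zero, if_neg fun h' => h h'.1]

theorem cyclicDeriv_append_comm (b : A) (l l' : List A) :
    cyclicDeriv M b (l ++ l') = cyclicDeriv M b (l' ++ l) := by
  simp only [cyclicDeriv, occSum_append, List.append_assoc]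
  exact add_comm _ _

theorem D_mul_comm (b : A) (u v : R) : D M b (u * v) = D M b (v * u) := by
  have h : (LinearMap.mul ℂ R).compr₂ (D M b) = (LinearMap.mul ℂ R).flip.compr₂ (D M b) := by
    refine LinearMap.ext_basis M.B M.B fun q p => ?_
    simp only [LinearMap.compr₂_apply, LinearMap.flip_apply, LinearMap.mul_apply',
      D_basis_mul_basis]
    exact if_congr and_comm (cyclicDeriv_append_comm M b _ _) rfl
  exact LinearMap.congr_fun₂ h u v

theorem D_eq_zero_of_mem_commSub (b : A) {z : R} (hz : z ∈ commSub R) : D M b z = 0 := by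
  induction hz using Submodule.span_induction with
  | mem x hx =>
    obtain ⟨u, v, rfl⟩ := hx
    rw [map_sub, D_mul_comm, sub_self]
  | zero => exact map_zero _
  | add x y _ _ hx hy => rw [map_add, hx, hy, add_zero]
  | smul c x _ hx => rw [map_smul, hx, smul_zero]

theorem path_nil_mul_D_mul_path_nil (c : A) (z : R) :
    M.path (s c) (s c) [] * D M c z * M.path (t c) (t c) [] = D M c z := by
  have h : LinearMap.mulLeftRight ℂ (M.path (s c) (s c) [], M.path (t c) (t c) []) ∘ₗ D M c =
      D M c := by
    refine M.B.ext fun p => ?_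
    simp only [LinearMap.comp_apply, LinearMap.mulLeftRight_apply, D_basis, mul_ite, ite_mul,
      mul_zero, zero_mul, cyclicDeriv, occSum, Finset.mul_sum, Finset.sum_mul,
      Model.path_nil_mul_path, Model.path_mul_path_nil]
  exact LinearMap.congr_fun h z

end CyclicDerivative

section Substitution

variable [DecidableEq A] (M : Model s t R)

/-- `subst M c z y` is the sum, over the occurrences of the arrow `c` in `y`, of `y` with that
occurrence replaced by `z`. -/
noncomputable def subst (c : A) : R →ₗ[ℂ] R →ₗ[ℂ] R :=
  (M.B.constr ℂ fun q => occSum c q.arrows fun pre post =>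
    LinearMap.mulLeftRight ℂ (M.path (t c) q.tgt post, M.path q.src (s c) pre)).flip

/-- `wrap M c z y` is the part of `∂(z y)/∂c` coming from the occurrences of `c` in `y`. -/
noncomputable def wrap (c : A) : R →ₗ[ℂ] R →ₗ[ℂ] R :=
  (M.B.constr ℂ fun q => occSum c q.arrows fun pre post =>
    LinearMap.mulLeftRight ℂ (M.path q.src (s c) pre, M.path (t c) q.tgt post)).flip

theorem subst_basis (c : A) (z : R) (q : PathIn s t) :
    subst M c z (M.B q) = occSum c q.arrows fun pre post =>
      M.path (t c) q.tgt post * z * M.path q.src (s c) pre := by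
  rw [subst, LinearMap.flip_apply, Module.Basis.constr_basis]
  exact map_occSum (LinearMap.applyₗ (R := ℂ) z) _ _ _

theorem wrap_basis (c : A) (z : R) (q : PathIn s t) :
    wrap M c z (M.B q) = occSum c q.arrows fun pre post =>
      M.path q.src (s c) pre * z * M.path (t c) q.tgt post := by
  rw [wrap, LinearMap.flip_apply, Module.Basis.constr_basis]
  exact map_occSum (LinearMap.applyₗ (R := ℂ) z) _ _ _

theorem subst_path (c : A) (z : R) {v w : Fin k} {l : List A} (h : isPath s t v l w = true) :
    subst M c z (M.path v w l) = occSum c l fun pre post =>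
      M.path (t c) w post * z * M.path v (s c) pre := by
  rw [Model.path_of_isPath h, subst_basis]

theorem wrap_path (c : A) (z : R) {v w : Fin k} {l : List A} (h : isPath s t v l w = true) :
    wrap M c z (M.path v w l) = occSum c l fun pre post =>
      M.path v (s c) pre * z * M.path (t c) w post := by
  rw [Model.path_of_isPath h, wrap_basis]

theorem subst_idPath (c : A) (z : R) (v : Fin k) : subst M c z (M.B (idPath s t v)) = 0 := by
  simp [subst_basis, occSum, idPath]

theorem subst_arrPath (c e : A) (z : R) :
    subst M c z (M.B (arrPath s t e)) =
      if e = c then M.path (t c) (t c) [] * z * M.path (s c) (s c) [] else 0 := by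
  by_cases h : e = c
  · subst h
    simp [subst_basis, occSum, arrPath]
  · simp [subst_basis, occSum, arrPath, h]

end Substitution

section ProductRules

variable [DecidableEq A] (M : Model s t R)

theorem subst_basis_mul_basis (c : A) (z : R) (p q : PathIn s t) :
    subst M c z (M.B q * M.B p) = M.B q * subst M c z (M.B p) + subst M c z (M.B q) * M.B p := by
  rw [subst_basis, subst_basis, mul_occSum, occSum_mul]
  by_cases h : p.tgt = q.src
  · have hq : isPath s t p.tgt q.arrows q.tgt = true := h ▸ q.is_path
    rw [M.mul_of_comp p q h, subst_basis]
    change occSum c (p.arrows ++ q.arrows)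
      (fun pre post => M.path (t c) q.tgt post * z * M.path p.src (s c) pre) = _
    refine (occSum_append c p.arrows q.arrows _).trans (congrArg₂ (· + ·) ?_ ?_)
    · refine occSum_congr_of_isPath p.is_path fun pre post _ hpost => ?_
      rw [← M.path_eq_basis h rfl, ← mul_assoc, ← mul_assoc, M.path_mul_path hpost hq]
    · refine occSum_congr_of_isPath q.is_path fun pre post hpre _ => ?_
      rw [← h] at hpre ⊢
      rw [← M.path_eq_basis rfl rfl, mul_assoc (_ * z), M.path_mul_path p.is_path hpre]
  · rw [M.mul_of_ncomp p q h, map_zero, occSum_eq_zero_of_isPath p.is_path,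
      occSum_eq_zero_of_isPath q.is_path, add_zero]
    · intro pre post hpre _
      rw [mul_assoc, ← M.path_src_tgt p, M.path_mul_path_of_ne p.is_path hpre h, mul_zero]
    · intro pre post _ hpost
      rw [← mul_assoc, ← mul_assoc, ← M.path_src_tgt q, M.path_mul_path_of_ne hpost q.is_path h,
        zero_mul, zero_mul]

theorem subst_mul (c : A) (z u v : R) :
    subst M c z (u * v) = u * subst M c z v + subst M c z u * v := by
  have h : (LinearMap.mul ℂ R).compr₂ (subst M c z) =
      (LinearMap.mul ℂ R).compl₂ (subst M c z) + (LinearMap.mul ℂ R).comp (subst M c z) :=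
    LinearMap.ext_basis M.B M.B fun q p => by simpa using subst_basis_mul_basis M c z p q
  simpa using LinearMap.congr_fun₂ h u v

theorem wrap_basis_basis_eq_zero (c : A) {p q : PathIn s t}
    (h : ¬ (p.tgt = q.src ∧ q.tgt = p.src)) : wrap M c (M.B q) (M.B p) = 0 := by
  rw [wrap_basis, ← M.path_src_tgt q]
  refine occSum_eq_zero_of_isPath p.is_path fun pre post hpre hpost => ?_
  rw [mul_assoc]
  by_cases hpq : p.tgt = q.src
  · have hq : isPath s t p.tgt q.arrows q.tgt = true := hpq ▸ q.is_path
    rw [← hpq, M.path_mul_path hpost hq,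
      M.path_mul_path_of_ne (isPath_append hpost hq) hpre fun h' => h ⟨hpq, h'⟩]
  · rw [M.path_mul_path_of_ne hpost q.is_path hpq, mul_zero]

theorem D_basis_mul_basis_eq_wrap (c : A) (p q : PathIn s t) :
    D M c (M.B q * M.B p) = wrap M c (M.B q) (M.B p) + wrap M c (M.B p) (M.B q) := by
  rw [D_basis_mul_basis]
  split_ifs with h
  · obtain ⟨hpq, hqp⟩ := h
    have hp : isPath s t q.tgt p.arrows q.src = true := by rw [hqp, ← hpq]; exact p.is_path
    have hq : isPath s t p.tgt q.arrows p.src = true := by rw [hpq, ← hqp]; exact q.is_path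
    rw [cyclicDeriv, occSum_append, wrap_basis, wrap_basis]
    congr 1
    · refine occSum_congr_of_isPath p.is_path fun pre post hpre hpost => ?_
      rw [← M.path_eq_basis hpq hqp.symm, M.path_mul_path_mul_path hpost hq hpre]
    · refine occSum_congr_of_isPath q.is_path fun pre post hpre hpost => ?_
      rw [← M.path_eq_basis hqp hpq.symm, M.path_mul_path_mul_path hpost hp hpre,
        List.append_assoc]
  · rw [wrap_basis_basis_eq_zero M c h,
      wrap_basis_basis_eq_zero M c fun h' => h ⟨h'.2, h'.1⟩, add_zero]

theorem D_mul (c : A) (u v : R) : D M c (u * v) = wrap M c u v + wrap M c v u := by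
  have h : (LinearMap.mul ℂ R).compr₂ (D M c) = wrap M c + (wrap M c).flip :=
    LinearMap.ext_basis M.B M.B fun q p => by simpa using D_basis_mul_basis_eq_wrap M c p q
  simpa using LinearMap.congr_fun₂ h u v

end ProductRules

section Exchange

variable [DecidableEq A] (M : Model s t R)

/-- Both sides are the sum, over ordered pairs `(i, j)` of distinct positions of the cycle `l`
carrying `c` and `b`, of the two arcs between `i` and `j` joined through `u`. -/
theorem subst_cyclicDeriv_eq_wrap_cyclicDeriv (b c : A) (u : R) {v : Fin k} {l : List A}
    (hl : isPath s t v l v = true) :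
    subst M b u (cyclicDeriv M c l) = wrap M c u (cyclicDeriv M b l) := by
  let P : ℕ → ℕ → R := fun i j =>
    M.path (t b) (s c) (cyclicSegment l j i) * u * M.path (t c) (s b) (cyclicSegment l i j)
  have lhs : subst M b u (cyclicDeriv M c l) =
      ∑ i ∈ Finset.range l.length, ∑ j ∈ Finset.range l.length,
        if l[i]? = some c ∧ j ≠ i ∧ l[j]? = some b then P i j else 0 := by
    rw [cyclicDeriv, map_occSum, occSum]
    refine Finset.sum_congr rfl fun i hi => ?_
    by_cases hc : l[i]? = some c
    · have hcyc := isPath_drop_append_take hl hc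
      rw [if_pos hc, subst_path M b u hcyc, ← cyclicSegment_self,
        occSum_cyclicSegment_self (Finset.mem_range.mp hi)]
      simp only [hc, true_and, P]
    · simp only [hc, false_and, if_false, Finset.sum_const_zero]
  have rhs : wrap M c u (cyclicDeriv M b l) =
      ∑ j ∈ Finset.range l.length, ∑ i ∈ Finset.range l.length,
        if l[j]? = some b ∧ i ≠ j ∧ l[i]? = some c then P i j else 0 := by
    rw [cyclicDeriv, map_occSum, occSum]
    refine Finset.sum_congr rfl fun j hj => ?_
    by_cases hb : l[j]? = some b
    · have hcyc := isPath_drop_append_take hl hb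
      rw [if_pos hb, wrap_path M c u hcyc, ← cyclicSegment_self,
        occSum_cyclicSegment_self (Finset.mem_range.mp hj)]
      simp only [hb, true_and, P]
    · simp only [hb, false_and, if_false, Finset.sum_const_zero]
  rw [lhs, rhs, Finset.sum_comm]
  refine Finset.sum_congr rfl fun j _ => Finset.sum_congr rfl fun i _ => if_congr ?_ rfl rfl
  exact ⟨fun ⟨h₁, h₂, h₃⟩ => ⟨h₃, h₂.symm, h₁⟩, fun ⟨h₁, h₂, h₃⟩ => ⟨h₃, h₂.symm, h₁⟩⟩

theorem subst_D_eq_wrap_D (b c : A) (u z : R) : subst M b u (D M c z) = wrap M c u (D M b z) := by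
  have h : subst M b u ∘ₗ D M c = wrap M c u ∘ₗ D M b := by
    refine M.B.ext fun q => ?_
    simp only [LinearMap.comp_apply, D_basis]
    split_ifs with hq
    · exact subst_cyclicDeriv_eq_wrap_cyclicDeriv M b c u (hq ▸ q.is_path)
    · simp
  exact LinearMap.congr_fun h z

end Exchange

section CyclicEquivalence

variable [DecidableEq A] (M : Model s t R)

theorem mk_subst (c : A) (z y : R) :
    Submodule.Quotient.mk (p := commSub R) (subst M c z y) =
      Submodule.Quotient.mk (z * D M c y) := by
  have h : (commSub R).mkQ ∘ₗ subst M c z = (commSub R).mkQ ∘ₗ LinearMap.mulLeft ℂ z ∘ₗ D M c := by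
    refine M.B.ext fun q => ?_
    simp only [LinearMap.comp_apply, LinearMap.mulLeft_apply, subst_basis, D_basis]
    rw [map_occSum]
    split_ifs with hq
    · rw [cyclicDeriv, mul_occSum, map_occSum]
      refine occSum_congr_of_isPath q.is_path fun pre post hpre hpost => ?_
      rw [← hq] at hpost ⊢
      rw [Submodule.mkQ_apply, Submodule.mkQ_apply, mk_mul_mul_eq_mk_mul,
        M.path_mul_path hpost hpre]
    · rw [mul_zero, map_zero]
      refine occSum_eq_zero_of_isPath q.is_path fun pre post hpre hpost => ?_
      rw [Submodule.mkQ_apply, mk_mul_mul_eq_mk_mul,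
        M.path_mul_path_of_ne hpost hpre fun h => hq h.symm, mul_zero, Submodule.Quotient.mk_zero]
  exact LinearMap.congr_fun h y

end CyclicEquivalence

section Double

variable {A₀ : Type} [DecidableEq A₀] [Fintype A₀] (s₀ t₀ : A₀ → Fin k)
  (M : Model (ds s₀ t₀) (dt s₀ t₀) R)

noncomputable def bracket : R →ₗ[ℂ] R →ₗ[ℂ] R :=
  ∑ a : A₀, ((LinearMap.mul ℂ R).compl₁₂ (D M (.inl a)) (D M (.inr a)) -
    (LinearMap.mul ℂ R).compl₁₂ (D M (.inr a)) (D M (.inl a)))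

theorem bracket_apply (x y : R) : bracket s₀ t₀ M x y = br s₀ t₀ M x y := by
  simp [bracket, br, LinearMap.sum_apply]

theorem br_eq_zero_of_mem_left {x : R} (hx : x ∈ commSub R) (y : R) : br s₀ t₀ M x y = 0 := by
  simp [br, D_eq_zero_of_mem_commSub M _ hx]

theorem br_eq_zero_of_mem_right (x : R) {y : R} (hy : y ∈ commSub R) : br s₀ t₀ M x y = 0 := by
  simp [br, D_eq_zero_of_mem_commSub M _ hy]

theorem br_add_br_swap_mem (x y : R) : br s₀ t₀ M x y + br s₀ t₀ M y x ∈ commSub R := by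
  rw [br, br, ← Finset.sum_add_distrib]
  refine Submodule.sum_mem _ fun a _ => ?_
  set X := D M (.inl a) x
  set X' := D M (.inr a) x
  set Y := D M (.inl a) y
  set Y' := D M (.inr a) y
  rw [show X * Y' - X' * Y + (Y * X' - Y' * X) = (X * Y' - Y' * X) + (Y * X' - X' * Y) by abel]
  exact Submodule.add_mem _ (mem_commSub_mul_sub_mul _ _) (mem_commSub_mul_sub_mul _ _)

noncomputable def theta (x : R) : R →ₗ[ℂ] R :=
  ∑ a : A₀, (subst M (.inr a) (D M (.inl a) x) - subst M (.inl a) (D M (.inr a) x))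

theorem theta_apply (x z : R) :
    theta s₀ t₀ M x z =
      ∑ a : A₀, (subst M (.inr a) (D M (.inl a) x) z - subst M (.inl a) (D M (.inr a) x) z) := by
  simp [theta, LinearMap.sum_apply]

theorem isThetaOf_theta (x : R) : IsThetaOf s₀ t₀ M x (theta s₀ t₀ M x) := by
  refine ⟨⟨fun u v => ?_, fun v => ?_⟩, fun a => ⟨?_, ?_⟩⟩
  · simp only [theta_apply, subst_mul, Finset.sum_mul, Finset.mul_sum, ← Finset.sum_add_distrib]
    refine Finset.sum_congr rfl fun a _ => ?_
    noncomm_ring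
  · simp [theta_apply, subst_idPath]
  · simp only [theta_apply, subst_arrPath, reduceCtorEq, Sum.inl.injEq, if_false, zero_sub,
      Finset.sum_neg_distrib, Finset.sum_ite_eq, Finset.mem_univ, if_true]
    exact congrArg Neg.neg (path_nil_mul_D_mul_path_nil M (.inr a) x)
  · simp only [theta_apply, subst_arrPath, reduceCtorEq, Sum.inr.injEq, if_false, sub_zero,
      Finset.sum_ite_eq, Finset.mem_univ, if_true]
    exact path_nil_mul_D_mul_path_nil M (.inl a) x

theorem D_br (c : A₀ ⊕ A₀) (x y : R) :
    D M c (br s₀ t₀ M x y) = theta s₀ t₀ M x (D M c y) - theta s₀ t₀ M y (D M c x) := by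
  simp only [br, theta_apply, map_sum, map_sub, D_mul, subst_D_eq_wrap_D,
    ← Finset.sum_sub_distrib]
  refine Finset.sum_congr rfl fun a _ => ?_
  abel

theorem theta_br (x y : R) :
    theta s₀ t₀ M (br s₀ t₀ M x y) =
      theta s₀ t₀ M x ∘ₗ theta s₀ t₀ M y - theta s₀ t₀ M y ∘ₗ theta s₀ t₀ M x := by
  obtain ⟨⟨hxy_mul, hxy_id⟩, hxy_arr⟩ := isThetaOf_theta s₀ t₀ M (br s₀ t₀ M x y)
  obtain ⟨⟨hx_mul, hx_id⟩, hx_arr⟩ := isThetaOf_theta s₀ t₀ M x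
  obtain ⟨⟨hy_mul, hy_id⟩, hy_arr⟩ := isThetaOf_theta s₀ t₀ M y
  refine M.ext_of_leibniz hxy_mul (leibniz_comp_sub_comp hx_mul hy_mul) (fun v => ?_) ?_
  · simp [hxy_id, hx_id, hy_id]
  · rintro (a | a)
    · simp only [LinearMap.sub_apply, LinearMap.comp_apply, hxy_arr, hx_arr, hy_arr, D_br,
        map_neg]
      abel
    · simp only [LinearMap.sub_apply, LinearMap.comp_apply, hxy_arr, hx_arr, hy_arr, D_br]

theorem mk_theta (x z : R) :
    Submodule.Quotient.mk (p := commSub R) (theta s₀ t₀ M x z) =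
      Submodule.Quotient.mk (br s₀ t₀ M x z) := by
  simp only [theta_apply, br, ← Submodule.mkQ_apply, map_sum, map_sub]
  simp only [Submodule.mkQ_apply, mk_subst]

theorem mk_theta_theta (x y z : R) :
    Submodule.Quotient.mk (p := commSub R) (theta s₀ t₀ M x (theta s₀ t₀ M y z)) =
      Submodule.Quotient.mk (br s₀ t₀ M x (br s₀ t₀ M y z)) := by
  rw [← mk_theta, Submodule.Quotient.eq, ← map_sub]
  exact map_mem_commSub_of_leibniz (isThetaOf_theta s₀ t₀ M x).1.1
    ((Submodule.Quotient.eq _).1 (mk_theta s₀ t₀ M y z))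

theorem mk_br_br (x y z : R) :
    Submodule.Quotient.mk (p := commSub R) (br s₀ t₀ M (br s₀ t₀ M x y) z) =
      Submodule.Quotient.mk (br s₀ t₀ M x (br s₀ t₀ M y z)) -
        Submodule.Quotient.mk (br s₀ t₀ M y (br s₀ t₀ M x z)) := by
  rw [← mk_theta, theta_br, LinearMap.sub_apply, LinearMap.comp_apply, LinearMap.comp_apply,
    Submodule.Quotient.mk_sub, mk_theta_theta, mk_theta_theta]

noncomputable def necklaceBracket :
    R ⧸ commSub R →ₗ[ℂ] R ⧸ commSub R →ₗ[ℂ] R ⧸ commSub R :=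
  (commSub R).liftQ₂ (commSub R) ((bracket s₀ t₀ M).compr₂ (commSub R).mkQ)
    (by
      intro x hx
      ext y
      simp [bracket_apply, br_eq_zero_of_mem_left s₀ t₀ M hx])
    (by
      intro y hy
      ext x
      simp [bracket_apply, br_eq_zero_of_mem_right s₀ t₀ M x hy])

theorem necklaceBracket_mk (x y : R) :
    necklaceBracket s₀ t₀ M (Submodule.Quotient.mk x) (Submodule.Quotient.mk y) =
      Submodule.Quotient.mk (br s₀ t₀ M x y) :=
  (Submodule.liftQ₂_mk _ _ _ _ _ x y).trans
    (congrArg Submodule.Quotient.mk (bracket_apply s₀ t₀ M x y))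

theorem necklaceBracket_swap (ξ η : R ⧸ commSub R) :
    necklaceBracket s₀ t₀ M ξ η = -necklaceBracket s₀ t₀ M η ξ := by
  induction ξ using Submodule.Quotient.induction_on with | _ x
  induction η using Submodule.Quotient.induction_on with | _ y
  rw [necklaceBracket_mk, necklaceBracket_mk, eq_neg_iff_add_eq_zero,
    ← Submodule.Quotient.mk_add, Submodule.Quotient.mk_eq_zero]
  exact br_add_br_swap_mem s₀ t₀ M x y

theorem necklaceBracket_necklaceBracket (ξ η ζ : R ⧸ commSub R) :
    necklaceBracket s₀ t₀ M (necklaceBracket s₀ t₀ M ξ η) ζ =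
      necklaceBracket s₀ t₀ M ξ (necklaceBracket s₀ t₀ M η ζ) -
        necklaceBracket s₀ t₀ M η (necklaceBracket s₀ t₀ M ξ ζ) := by
  induction ξ using Submodule.Quotient.induction_on with | _ x
  induction η using Submodule.Quotient.induction_on with | _ y
  induction ζ using Submodule.Quotient.induction_on with | _ z
  simp only [necklaceBracket_mk]
  exact mk_br_br s₀ t₀ M x y z

end Double

/-- the necklace bracket
`{w₁,w₂}_K = Σ_{a ∈ Q_a} (∂w₁/∂a ∂w₂/∂a* − ∂w₁/∂a* ∂w₂/∂a) mod [ℂ𝔔,ℂ𝔔]` descends to a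
well-defined bilinear bracket on `ℂ𝔔/[ℂ𝔔,ℂ𝔔]` (whose basis is the set of necklace
words of the double quiver `𝔔`), which is antisymmetric and satisfies the Jacobi
identity — making it the necklace Lie algebra `N_Q`. -/
theorem necklace_bracket_lie_algebra
    {k : ℕ} {A₀ : Type} [DecidableEq A₀] [Fintype A₀] (s₀ t₀ : A₀ → Fin k)
    (R : Type) [Ring R] [Algebra ℂ R] (M : Model (ds s₀ t₀) (dt s₀ t₀) R) :
    ∃ br' : (R ⧸ commSub R) →ₗ[ℂ] (R ⧸ commSub R) →ₗ[ℂ] (R ⧸ commSub R),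
      (∀ p q : PathIn (ds s₀ t₀) (dt s₀ t₀), p.src = p.tgt → q.src = q.tgt →
        br' (Submodule.Quotient.mk (p := commSub R) (M.B p))
            (Submodule.Quotient.mk (p := commSub R) (M.B q)) =
          Submodule.Quotient.mk (p := commSub R) (br s₀ t₀ M (M.B p) (M.B q))) ∧
      (∀ x y : R ⧸ commSub R, br' x y = - br' y x) ∧
      (∀ x y z : R ⧸ commSub R,
        br' (br' x y) z + br' (br' y z) x + br' (br' z x) y = 0) := by
  refine ⟨necklaceBracket s₀ t₀ M, fun p q _ _ => necklaceBracket_mk s₀ t₀ M _ _,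
    necklaceBracket_swap s₀ t₀ M, fun x y z => ?_⟩
  rw [necklaceBracket_necklaceBracket, necklaceBracket_swap s₀ t₀ M _ x,
    necklaceBracket_swap s₀ t₀ M _ y, necklaceBracket_swap s₀ t₀ M z x, map_neg, neg_neg]
  abel

end Necklace
end

section
/- For each necklace word w, the assignment θ_w(a) = −∂w/∂a* and θ_w(a*) = ∂w/∂a extends to a symplectic V-derivation of C𝔔, i.e., L_{θ_w}(ω) = 0 in dR^2_V C𝔔 where ω = Σ_{a ∈ Q_a} da* da; moreover i_{θ_w}(ω) = dw. -/
namespace Necklace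

variable {k : ℕ} {A : Type}

variable {s t : A → Fin k}

variable {R : Type} [Ring R] [Algebra ℂ R]

/-- The span of all super-commutators `Σᵢ [Ωⁱ, Ω^{n-i}]`; the Karoubi complex `dR•` is
the quotient of `Ω•` by this subspace. -/
def karoubi {k : ℕ} {A : Type} {s t : A → Fin k} {R : Type} [Ring R] [Algebra ℂ R]
    {M : Model s t R} {W : Type} [Ring W] [Algebra ℂ W] (F : Forms R M W) :
    Submodule ℂ W :=
  Submodule.span ℂ {z : W | ∃ (m n : ℕ) (x y : W), x ∈ F.gr m ∧ y ∈ F.gr n ∧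
    z = x * y - ((-1 : ℂ) ^ (m * n)) • (y * x)}

/-- `L` is the Lie derivative `L_θ` on `Ω•` attached to the derivation `θ` of `ℂ𝔔`. -/
def IsLOf {k : ℕ} {A : Type} {s t : A → Fin k} {R : Type} [Ring R] [Algebra ℂ R]
    {M : Model s t R} {W : Type} [Ring W] [Algebra ℂ W] (F : Forms R M W)
    (θ : R →ₗ[ℂ] R) (L : W →ₗ[ℂ] W) : Prop :=
  (∀ x y : W, L (x * y) = L x * y + x * L y) ∧
  (∀ x : R, L (F.ι x) = F.ι (θ x)) ∧
  (∀ x : R, L (F.d (F.ι x)) = F.d (F.ι (θ x)))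

/-- `i` is the contraction `i_θ` on `Ω•` attached to the derivation `θ` of `ℂ𝔔`. -/
def IsIOf {k : ℕ} {A : Type} {s t : A → Fin k} {R : Type} [Ring R] [Algebra ℂ R]
    {M : Model s t R} {W : Type} [Ring W] [Algebra ℂ W] (F : Forms R M W)
    (θ : R →ₗ[ℂ] R) (i : W →ₗ[ℂ] W) : Prop :=
  (∀ (m : ℕ) (x : W), x ∈ F.gr m → ∀ y : W,
    i (x * y) = i x * y + ((-1 : ℂ) ^ m) • (x * i y)) ∧
  (∀ x : R, i (F.ι x) = 0) ∧
  (∀ x : R, i (F.d (F.ι x)) = F.ι (θ x))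

section Omega

variable {A₀ : Type} (s₀ t₀ : A₀ → Fin k) [DecidableEq A₀] [Fintype A₀]
variable {R : Type} [Ring R] [Algebra ℂ R] {W : Type} [Ring W] [Algebra ℂ W]

/-- The canonical symplectic form `ω = Σ_{a ∈ Q_a} da* da ∈ Ω²_V ℂ𝔔`. -/
noncomputable def omega (M : Model (ds s₀ t₀) (dt s₀ t₀) R) (F : Forms R M W) : W :=
  ∑ a : A₀,
    F.d (F.ι (M.B (arrPath (ds s₀ t₀) (dt s₀ t₀) (Sum.inr a)))) *
      F.d (F.ι (M.B (arrPath (ds s₀ t₀) (dt s₀ t₀) (Sum.inl a))))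

end Omega

/-!
`θ_w` is obtained by extending its values on arrows along paths with the Leibniz rule.
For a cycle `w`, expanding `dw` by the Leibniz rule and rotating each term modulo `[Ω¹, Ω⁰]`
gives `dw ≡ S := Σ_b (∂w/∂b) db`. The defining values `θ(a) = -∂w/∂a*`, `θ(a*) = ∂w/∂a` then
give `i_θ ω ≡ S` modulo `[Ω¹, Ω⁰]` and `L_θ ω ≡ dS` modulo `[Ω¹, Ω¹]`. Finally `dS ≡ 0`:
`dS = -d(dw - S)` since `d² = 0`, and `d` maps `[Ω¹, Ω⁰]` into the Karoubi subspace.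
-/

section Paths

variable {k : ℕ} {A : Type} {s t : A → Fin k}

theorem PathIn.ext {p q : PathIn s t} (h_src : p.src = q.src) (h_tgt : p.tgt = q.tgt)
    (h_arrows : p.arrows = q.arrows) : p = q := by
  cases p; cases q; simp_all

theorem isPath_take_and_drop {l : List A} {v w : Fin k} (h : isPath s t v l w = true)
    (i : ℕ) (hi : i < l.length) :
    isPath s t v (l.take i) (s l[i]) = true ∧ isPath s t (t l[i]) (l.drop (i + 1)) w = true := by
  induction l generalizing v i with
  | nil => simp at hi
  | cons a l ih =>
    simp only [isPath, Bool.and_eq_true, decide_eq_true_eq] at h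
    cases i with
    | zero => simp [isPath, h.1, h.2]
    | succ i =>
      obtain ⟨h_take, h_drop⟩ := ih h.2 i (by simpa using hi)
      simpa [isPath, h.1] using ⟨h_take, h_drop⟩

def PathIn.take (q : PathIn s t) (i : ℕ) (hi : i < q.arrows.length) : PathIn s t :=
  ⟨q.src, s q.arrows[i], q.arrows.take i, (isPath_take_and_drop q.is_path i hi).1⟩

def PathIn.drop (q : PathIn s t) (i : ℕ) (hi : i < q.arrows.length) : PathIn s t :=
  ⟨t q.arrows[i], q.tgt, q.arrows.drop (i + 1), (isPath_take_and_drop q.is_path i hi).2⟩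

namespace PathIn

variable (q r : PathIn s t) (h : q.tgt = r.src)

theorem length_comp : (q.comp r h).arrows.length = q.arrows.length + r.arrows.length :=
  List.length_append

theorem take_comp_of_lt {i : ℕ} (hi : i < q.arrows.length)
    (hi' : i < (q.comp r h).arrows.length) : (q.comp r h).take i hi' = q.take i hi :=
  PathIn.ext rfl (by simp [take, comp, List.getElem_append_left hi])
    (List.take_append_of_le_length hi.le)

theorem drop_comp_of_lt {i : ℕ} (hi : i < q.arrows.length)
    (hi' : i < (q.comp r h).arrows.length) :
    (q.comp r h).drop i hi' = (q.drop i hi).comp r h :=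
  PathIn.ext (by simp [drop, comp, List.getElem_append_left hi]) rfl
    (List.drop_append_of_le_length hi)

theorem getElem_comp_length_add {j : ℕ} (hj : j < r.arrows.length)
    (hj' : q.arrows.length + j < (q.comp r h).arrows.length) :
    (q.comp r h).arrows[q.arrows.length + j] = r.arrows[j] := by
  simp [comp, List.getElem_append_right]

theorem take_comp_length_add {j : ℕ} (hj : j < r.arrows.length)
    (hj' : q.arrows.length + j < (q.comp r h).arrows.length) :
    (q.comp r h).take (q.arrows.length + j) hj' = q.comp (r.take j hj) h :=
  PathIn.ext rfl (by simp only [take, getElem_comp_length_add q r h hj]; rfl)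
    (List.take_length_add_append j)

theorem drop_comp_length_add {j : ℕ} (hj : j < r.arrows.length)
    (hj' : q.arrows.length + j < (q.comp r h).arrows.length) :
    (q.comp r h).drop (q.arrows.length + j) hj' = r.drop j hj :=
  PathIn.ext (by simp only [drop, getElem_comp_length_add q r h hj]) rfl
    (by simp [comp, drop, add_assoc])

end PathIn

end Paths

section PathSum

variable {k : ℕ} {A : Type} {s t : A → Fin k}
variable {R : Type} [Ring R] [Algebra ℂ R] {W : Type} [Ring W]

theorem Model.B_mul_B_idPath_src (M : Model s t R) (q : PathIn s t) :
    M.B q * M.B (idPath s t q.src) = M.B q := by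
  rw [M.mul_of_comp (idPath s t q.src) q rfl]
  exact congrArg M.B (PathIn.ext rfl rfl (List.nil_append _))

theorem Model.B_idPath_tgt_mul_B (M : Model s t R) (q : PathIn s t) :
    M.B (idPath s t q.tgt) * M.B q = M.B q := by
  rw [M.mul_of_comp q (idPath s t q.tgt) rfl]
  exact congrArg M.B (PathIn.ext rfl rfl (List.append_nil _))

/-- The value on `q` of the derivation with values `f` on arrows, pushed along `φ`; recall that
`B q * B p` is the path `p` followed by `q`. -/
noncomputable def pathSum (M : Model s t R) (φ : R →+* W) (f : A → W) (q : PathIn s t) : W :=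
  ∑ i : Fin q.arrows.length, φ (M.B (q.drop i i.2)) * f q.arrows[i] * φ (M.B (q.take i i.2))

variable (M : Model s t R) (φ : R →+* W) (f : A → W)

theorem pathSum_comp (q r : PathIn s t) (h : q.tgt = r.src) :
    pathSum M φ f (q.comp r h) = pathSum M φ f r * φ (M.B q) + φ (M.B r) * pathSum M φ f q := by
  rw [pathSum, ← Fin.sum_congr' _ (q.length_comp r h).symm, Fin.sum_univ_add, add_comm,
    pathSum, pathSum, Finset.mul_sum, Finset.sum_mul]
  congr 1
  · refine Finset.sum_congr rfl fun j _ => ?_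
    simp only [Fin.getElem_fin, Fin.val_cast, Fin.val_natAdd, q.drop_comp_length_add r h j.2,
      q.take_comp_length_add r h j.2, q.getElem_comp_length_add r h j.2]
    rw [← M.mul_of_comp q (r.take j j.2) h, map_mul, mul_assoc _ (φ _)]
  · refine Finset.sum_congr rfl fun i _ => ?_
    simp only [Fin.getElem_fin, Fin.val_cast, Fin.val_castAdd, q.drop_comp_of_lt r h i.2,
      q.take_comp_of_lt r h i.2]
    rw [← M.mul_of_comp (q.drop i i.2) r h, map_mul]
    simp [PathIn.comp, List.getElem_append_left, mul_assoc]

theorem pathSum_mul_add_mul_pathSum_of_tgt_ne_src {q r : PathIn s t} (h : q.tgt ≠ r.src) :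
    pathSum M φ f r * φ (M.B q) + φ (M.B r) * pathSum M φ f q = 0 := by
  have hr : pathSum M φ f r * φ (M.B q) = 0 :=
    (Finset.sum_mul ..).trans <| Finset.sum_eq_zero fun i _ => by
      rw [mul_assoc, ← map_mul, M.mul_of_ncomp q (r.take i i.2) h, map_zero, mul_zero]
  have hq : φ (M.B r) * pathSum M φ f q = 0 :=
    (Finset.mul_sum ..).trans <| Finset.sum_eq_zero fun i _ => by
      rw [← mul_assoc, ← mul_assoc, ← map_mul, M.mul_of_ncomp (q.drop i i.2) r h, map_zero,
        zero_mul, zero_mul]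
  rw [hr, hq, add_zero]

theorem pathSum_idPath (v : Fin k) : pathSum M φ f (idPath s t v) = 0 :=
  Fin.sum_univ_zero _

theorem pathSum_arrPath (b : A) :
    pathSum M φ f (arrPath s t b) =
      φ (M.B (idPath s t (t b))) * f b * φ (M.B (idPath s t (s b))) :=
  Fin.sum_univ_one _

end PathSum

section Derivation

variable {k : ℕ} {A : Type} {s t : A → Fin k} {R : Type} [Ring R] [Algebra ℂ R]

/-- A derivation of `ℂQ` for every `f`; its value on the arrow `b` is `e_{t b} f(b) e_{s b}`. -/
noncomputable def derivOfArrows (M : Model s t R) (f : A → R) : R →ₗ[ℂ] R :=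
  M.B.constr ℂ (pathSum M (RingHom.id R) f)

variable (M : Model s t R) (f : A → R)

theorem derivOfArrows_B (q : PathIn s t) :
    derivOfArrows M f (M.B q) = pathSum M (RingHom.id R) f q :=
  M.B.constr_basis ℂ _ q

theorem derivOfArrows_mul (x y : R) :
    derivOfArrows M f (x * y) = derivOfArrows M f x * y + x * derivOfArrows M f y := by
  set θ := derivOfArrows M f
  have on_basis : (LinearMap.mul ℂ R).compr₂ θ =
      (LinearMap.mul ℂ R).comp θ + (LinearMap.mul ℂ R).compl₂ θ := by
    refine M.B.ext fun r => M.B.ext fun q => ?_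
    simp only [LinearMap.compr₂_apply, LinearMap.mul_apply', LinearMap.comp_apply,
      LinearMap.add_apply, LinearMap.compl₂_apply, θ, derivOfArrows_B]
    by_cases hc : q.tgt = r.src
    · rw [M.mul_of_comp q r hc, derivOfArrows_B, pathSum_comp]
      rfl
    · rw [M.mul_of_ncomp q r hc, map_zero]
      exact (pathSum_mul_add_mul_pathSum_of_tgt_ne_src M (RingHom.id R) f hc).symm
  simpa using congr($on_basis x y)

theorem derivOfArrows_idPath (v : Fin k) : derivOfArrows M f (M.B (idPath s t v)) = 0 := by
  rw [derivOfArrows_B, pathSum_idPath]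

theorem derivOfArrows_arrPath {b : A}
    (hb : M.B (idPath s t (t b)) * f b * M.B (idPath s t (s b)) = f b) :
    derivOfArrows M f (M.B (arrPath s t b)) = f b := by
  rw [derivOfArrows_B, pathSum_arrPath]
  exact hb

theorem B_idPath_mul_D_mul_B_idPath [DecidableEq A] (b : A) (x : R) :
    M.B (idPath s t (s b)) * D M b x * M.B (idPath s t (t b)) = D M b x := by
  have on_basis : (LinearMap.mulRight ℂ (M.B (idPath s t (t b)))).comp
      ((LinearMap.mulLeft ℂ (M.B (idPath s t (s b)))).comp (D M b)) = D M b := by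
    refine M.B.ext fun q => ?_
    simp only [LinearMap.comp_apply, LinearMap.mulLeft_apply, LinearMap.mulRight_apply, D,
      Module.Basis.constr_basis, derivPath, Finset.mul_sum, Finset.sum_mul]
    refine Finset.sum_congr rfl fun i _ => ?_
    split_ifs with hc
    · exact (congrArg (· * _) (M.B_idPath_tgt_mul_B ⟨t b, s b, _, hc.2.2⟩)).trans
        (M.B_mul_B_idPath_src _)
    · rw [mul_zero, zero_mul]
  exact congr($on_basis x)

variable {A₀ : Type} (s₀ t₀ : A₀ → Fin k) [DecidableEq A₀]

/-- The values `θ_x(a) = -∂x/∂a*`, `θ_x(a*) = ∂x/∂a` of the Hamiltonian derivation of `x`. -/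
noncomputable def hamiltonianArrows (M : Model (ds s₀ t₀) (dt s₀ t₀) R) (x : R) :
    A₀ ⊕ A₀ → R :=
  Sum.elim (fun a => -D M (Sum.inr a) x) (fun a => D M (Sum.inl a) x)

theorem isThetaOf_derivOfArrows_hamiltonianArrows [Fintype A₀]
    (M : Model (ds s₀ t₀) (dt s₀ t₀) R) (x : R) :
    IsThetaOf s₀ t₀ M x (derivOfArrows M (hamiltonianArrows s₀ t₀ M x)) := by
  refine ⟨⟨derivOfArrows_mul M _, derivOfArrows_idPath M _⟩, fun a => ⟨?_, ?_⟩⟩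
  · refine derivOfArrows_arrPath M _ ?_
    show _ * -D M (Sum.inr a) x * _ = -D M (Sum.inr a) x
    rw [mul_neg, neg_mul, neg_inj]
    exact B_idPath_mul_D_mul_B_idPath M (Sum.inr a) x
  · exact derivOfArrows_arrPath M _ (B_idPath_mul_D_mul_B_idPath M (Sum.inl a) x)

end Derivation

namespace Forms

variable {k : ℕ} {A : Type} {s t : A → Fin k} {R : Type} [Ring R] [Algebra ℂ R]
  {M : Model s t R} {W : Type} [Ring W] [Algebra ℂ W] (F : Forms R M W)

theorem d_mul_of_mem_gr_zero {u : W} (hu : u ∈ F.gr 0) (v : W) :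
    F.d (u * v) = F.d u * v + u * F.d v := by
  simpa using F.d_leibniz 0 u hu v

theorem d_ι_mem_gr_one (x : R) : F.d (F.ι x) ∈ F.gr 1 :=
  F.d_mem 0 _ (F.ι_mem x)

theorem d_ι_mul (x y : R) :
    F.d (F.ι (x * y)) = F.d (F.ι x) * F.ι y + F.ι x * F.d (F.ι y) := by
  rw [map_mul, F.d_mul_of_mem_gr_zero (F.ι_mem x)]

theorem ι_B_idPath_mul_d_ι_B_mul_ι_B_idPath (q : PathIn s t) :
    F.ι (M.B (idPath s t q.tgt)) * F.d (F.ι (M.B q)) * F.ι (M.B (idPath s t q.src)) =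
      F.d (F.ι (M.B q)) := by
  conv_rhs => rw [← M.B_mul_B_idPath_src q, ← M.B_idPath_tgt_mul_B q]
  rw [d_ι_mul, d_ι_mul, F.d_vertex, F.d_vertex]
  simp

theorem d_ι_B_eq_pathSum (q : PathIn s t) :
    F.d (F.ι (M.B q)) =
      pathSum M (F.ι : R →+* W) (fun b => F.d (F.ι (M.B (arrPath s t b)))) q := by
  obtain ⟨v, w, l, hl⟩ := q
  induction l generalizing v with
  | nil =>
    obtain rfl : v = w := by simpa [isPath] using hl
    exact (F.d_vertex v).trans (pathSum_idPath M _ _ v).symm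
  | cons b l ih =>
    obtain ⟨rfl, hl'⟩ : s b = v ∧ isPath s t (t b) l w = true := by simpa [isPath] using hl
    have h_cons : (⟨s b, w, b :: l, hl⟩ : PathIn s t) = (arrPath s t b).comp ⟨t b, w, l, hl'⟩ rfl :=
      PathIn.ext rfl rfl rfl
    rw [h_cons, pathSum_comp M _ _ (arrPath s t b) ⟨t b, w, l, hl'⟩ rfl,
      ← M.mul_of_comp (arrPath s t b) ⟨t b, w, l, hl'⟩ rfl, d_ι_mul, ih, pathSum_arrPath]
    simp only [RingHom.coe_coe]
    exact congrArg (_ + _ * ·) (F.ι_B_idPath_mul_d_ι_B_mul_ι_B_idPath (arrPath s t b)).symm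

theorem mul_sub_smul_mul_mem_karoubi {m n : ℕ} {x y : W} (hx : x ∈ F.gr m) (hy : y ∈ F.gr n) :
    x * y - ((-1 : ℂ) ^ (m * n)) • (y * x) ∈ karoubi F :=
  Submodule.subset_span ⟨m, n, x, y, hx, hy, rfl⟩

theorem mul_sub_mul_mem_karoubi_of_mem_gr_zero {m : ℕ} {x y : W} (hx : x ∈ F.gr m)
    (hy : y ∈ F.gr 0) : x * y - y * x ∈ karoubi F := by
  simpa using F.mul_sub_smul_mul_mem_karoubi hx hy

theorem mul_add_mul_mem_karoubi_of_mem_gr_one {x y : W} (hx : x ∈ F.gr 1) (hy : y ∈ F.gr 1) :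
    x * y + y * x ∈ karoubi F := by
  simpa using F.mul_sub_smul_mul_mem_karoubi hx hy

def karoubiOneZero : Submodule ℂ W :=
  Submodule.span ℂ {z : W | ∃ x y : W, x ∈ F.gr 1 ∧ y ∈ F.gr 0 ∧ z = x * y - y * x}

theorem karoubiOneZero_le_karoubi : F.karoubiOneZero ≤ karoubi F :=
  Submodule.span_le.2 fun _ ⟨_, _, hx, hy, hz⟩ =>
    hz ▸ F.mul_sub_mul_mem_karoubi_of_mem_gr_zero hx hy

theorem d_mem_karoubi_of_mem_karoubiOneZero {z : W} (hz : z ∈ F.karoubiOneZero) :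
    F.d z ∈ karoubi F := by
  induction hz using Submodule.span_induction with
  | mem z hz =>
    obtain ⟨x, y, hx, hy, rfl⟩ := hz
    have h_expand : F.d (x * y - y * x) = (F.d x * y - y * F.d x) - (x * F.d y + F.d y * x) := by
      rw [map_sub, F.d_leibniz 1 x hx y, F.d_mul_of_mem_gr_zero hy x]
      simp only [pow_one, neg_smul, one_smul]
      abel
    rw [h_expand]
    exact sub_mem (F.mul_sub_mul_mem_karoubi_of_mem_gr_zero (F.d_mem 1 x hx) hy)
      (F.mul_add_mul_mem_karoubi_of_mem_gr_one hx (F.d_mem 0 y hy))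
  | zero => rw [map_zero]; exact zero_mem _
  | add x y _ _ hx hy => rw [map_add]; exact add_mem hx hy
  | smul a x _ hx => rw [map_smul]; exact Submodule.smul_mem _ a hx

end Forms

section Cycles

variable {k : ℕ} {A : Type} {s t : A → Fin k} [DecidableEq A] {R : Type} [Ring R] [Algebra ℂ R]

theorem D_B_of_src_eq_tgt (M : Model s t R) {p : PathIn s t} (hp : p.src = p.tgt) (b : A) :
    D M b (M.B p) = ∑ i : Fin p.arrows.length,
      if p.arrows[i] = b then M.B (p.take i i.2) * M.B (p.drop i i.2) else 0 := by
  rw [D, Module.Basis.constr_basis, derivPath, ← Fin.sum_univ_eq_sum_range]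
  refine Finset.sum_congr rfl fun i _ => ?_
  by_cases hb : p.arrows[i] = b
  · subst hb
    have h_path := isPath_append (p.drop i i.2).is_path (hp ▸ (p.take i i.2).is_path)
    rw [dif_pos ⟨hp, List.getElem?_eq_getElem i.2, h_path⟩, if_pos rfl,
      M.mul_of_comp (p.drop i i.2) (p.take i i.2) hp.symm]
    rfl
  · rw [dif_neg fun h => hb (Option.some.inj ((List.getElem?_eq_getElem i.2).symm.trans h.2.1)),
      if_neg hb]

variable [Fintype A] {M : Model s t R} {W : Type} [Ring W] [Algebra ℂ W] (F : Forms R M W)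

/-- `Σ_b (∂x/∂b) db`; for a cycle `x` it represents `dx` in `dR¹`. -/
noncomputable def Forms.partialsForm (x : R) : W :=
  ∑ b : A, F.ι (D M b x) * F.d (F.ι (M.B (arrPath s t b)))

theorem Forms.partialsForm_B_of_src_eq_tgt {p : PathIn s t} (hp : p.src = p.tgt) :
    F.partialsForm (M.B p) = ∑ i : Fin p.arrows.length,
      F.ι (M.B (p.take i i.2)) * F.ι (M.B (p.drop i i.2)) *
        F.d (F.ι (M.B (arrPath s t p.arrows[i]))) := by
  simp only [partialsForm, D_B_of_src_eq_tgt M hp, map_sum, Finset.sum_mul]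
  rw [Finset.sum_comm]
  refine Finset.sum_congr rfl fun i _ => ?_
  simp [apply_ite, ite_mul]

theorem Forms.d_ι_B_sub_partialsForm_mem_karoubiOneZero {p : PathIn s t} (hp : p.src = p.tgt) :
    F.d (F.ι (M.B p)) - F.partialsForm (M.B p) ∈ F.karoubiOneZero := by
  rw [F.d_ι_B_eq_pathSum, pathSum, F.partialsForm_B_of_src_eq_tgt hp, ← Finset.sum_sub_distrib]
  refine Submodule.sum_mem _ fun i _ => Submodule.subset_span
    ⟨F.ι (M.B (p.drop i i.2)) * F.d (F.ι (M.B (arrPath s t p.arrows[i]))),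
      F.ι (M.B (p.take i i.2)), F.mul_mem 0 1 _ _ (F.ι_mem _) (F.d_ι_mem_gr_one _),
      F.ι_mem _, by simp [mul_assoc]⟩

theorem Forms.d_partialsForm (x : R) :
    F.d (F.partialsForm x) =
      ∑ b, F.d (F.ι (D M b x)) * F.d (F.ι (M.B (arrPath s t b))) := by
  simp only [Forms.partialsForm, map_sum, F.d_mul_of_mem_gr_zero (F.ι_mem _), F.d_d, mul_zero,
    add_zero]

theorem Forms.d_partialsForm_B_mem_karoubi {p : PathIn s t} (hp : p.src = p.tgt) :
    F.d (F.partialsForm (M.B p)) ∈ karoubi F := by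
  simpa [F.d_d] using
    neg_mem (F.d_mem_karoubi_of_mem_karoubiOneZero (F.d_ι_B_sub_partialsForm_mem_karoubiOneZero hp))

end Cycles

section Symplectic

variable {k : ℕ} {A₀ : Type} [DecidableEq A₀] [Fintype A₀] {s₀ t₀ : A₀ → Fin k}
  {R : Type} [Ring R] [Algebra ℂ R] {M : Model (ds s₀ t₀) (dt s₀ t₀) R}
  {W : Type} [Ring W] [Algebra ℂ W] (F : Forms R M W) {w : R} {θ : R →ₗ[ℂ] R}

theorem lie_omega_sub_d_partialsForm_mem_karoubi {L : W →ₗ[ℂ] W}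
    (hθ : IsThetaOf s₀ t₀ M w θ) (hL : IsLOf F θ L) :
    L (omega s₀ t₀ M F) - F.d (F.partialsForm w) ∈ karoubi F := by
  have h_eq : L (omega s₀ t₀ M F) - F.d (F.partialsForm w) = -∑ a : A₀,
      (F.d (F.ι (M.B (arrPath (ds s₀ t₀) (dt s₀ t₀) (Sum.inr a)))) *
          F.d (F.ι (D M (Sum.inr a) w)) +
        F.d (F.ι (D M (Sum.inr a) w)) *
          F.d (F.ι (M.B (arrPath (ds s₀ t₀) (dt s₀ t₀) (Sum.inr a))))) := by
    rw [omega, map_sum, F.d_partialsForm, Fintype.sum_sum_type, ← Finset.sum_add_distrib,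
      ← Finset.sum_sub_distrib, ← Finset.sum_neg_distrib]
    refine Finset.sum_congr rfl fun a _ => ?_
    rw [hL.1, hL.2.2, hL.2.2, (hθ.2 a).1, (hθ.2 a).2, map_neg, map_neg]
    noncomm_ring
  rw [h_eq]
  exact neg_mem <| Submodule.sum_mem _ fun a _ =>
    F.mul_add_mul_mem_karoubi_of_mem_gr_one (F.d_ι_mem_gr_one _) (F.d_ι_mem_gr_one _)

theorem contraction_omega_sub_partialsForm_mem_karoubi {i : W →ₗ[ℂ] W}
    (hθ : IsThetaOf s₀ t₀ M w θ) (hi : IsIOf F θ i) :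
    i (omega s₀ t₀ M F) - F.partialsForm w ∈ karoubi F := by
  have h_eq : i (omega s₀ t₀ M F) - F.partialsForm w = ∑ a : A₀,
      (F.d (F.ι (M.B (arrPath (ds s₀ t₀) (dt s₀ t₀) (Sum.inr a)))) * F.ι (D M (Sum.inr a) w) -
        F.ι (D M (Sum.inr a) w) * F.d (F.ι (M.B (arrPath (ds s₀ t₀) (dt s₀ t₀) (Sum.inr a))))) := by
    rw [omega, map_sum, Forms.partialsForm, Fintype.sum_sum_type, ← Finset.sum_add_distrib,
      ← Finset.sum_sub_distrib]
    refine Finset.sum_congr rfl fun a _ => ?_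
    rw [hi.1 1 _ (F.d_ι_mem_gr_one _), hi.2.2, hi.2.2, (hθ.2 a).1, (hθ.2 a).2, map_neg]
    simp only [pow_one, neg_smul, one_smul]
    noncomm_ring
  rw [h_eq]
  exact Submodule.sum_mem _ fun a _ =>
    F.mul_sub_mul_mem_karoubi_of_mem_gr_zero (F.d_ι_mem_gr_one _) (F.ι_mem _)

end Symplectic

/-- for each necklace word `w` (represented by an oriented cycle `p` of
the double quiver `𝔔`), the assignment `θ_w(a) = −∂w/∂a*`, `θ_w(a*) = ∂w/∂a` extends to
a `V`-derivation `θ_w` of `ℂ𝔔` which is symplectic, i.e. `L_{θ_w}(ω) = 0` in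
`dR²_V ℂ𝔔` for `ω = Σ_{a ∈ Q_a} da* da`; moreover `i_{θ_w}(ω) = dw`. -/
theorem theta_w_symplectic
    {k : ℕ} {A₀ : Type} [DecidableEq A₀] [Fintype A₀] (s₀ t₀ : A₀ → Fin k)
    (R : Type) [Ring R] [Algebra ℂ R] (M : Model (ds s₀ t₀) (dt s₀ t₀) R)
    (W : Type) [Ring W] [Algebra ℂ W] (F : Forms R M W)
    (p : PathIn (ds s₀ t₀) (dt s₀ t₀)) (hp : p.src = p.tgt) :
    ∃ θ : R →ₗ[ℂ] R, IsThetaOf s₀ t₀ M (M.B p) θ ∧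
      ∀ L i : W →ₗ[ℂ] W, IsLOf F θ L → IsIOf F θ i →
        Submodule.Quotient.mk (p := karoubi F) (L (omega s₀ t₀ M F)) = 0 ∧
        Submodule.Quotient.mk (p := karoubi F) (i (omega s₀ t₀ M F)) =
          Submodule.Quotient.mk (p := karoubi F) (F.d (F.ι (M.B p))) := by
  have hθ := isThetaOf_derivOfArrows_hamiltonianArrows s₀ t₀ M (M.B p)
  refine ⟨_, hθ, fun L i hL hi => ⟨?_, ?_⟩⟩
  · rw [Submodule.Quotient.mk_eq_zero]
    simpa using add_mem (lie_omega_sub_d_partialsForm_mem_karoubi F hθ hL)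
      (F.d_partialsForm_B_mem_karoubi hp)
  · rw [Submodule.Quotient.eq]
    simpa using sub_mem (contraction_omega_sub_partialsForm_mem_karoubi F hθ hi)
      (F.karoubiOneZero_le_karoubi (F.d_ι_B_sub_partialsForm_mem_karoubiOneZero hp))

end Necklace
end
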